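/- arXiv:1605.05640 — 6 statements merged into one kernel-verified Lean document; each statement's English description precedes it below -/
import Mathlib

section
/- For any 3×3 real matrix A and any vector u in R^3, the identity A[u]_× + [u]_× Aᵀ + [Aᵀu]_× = tr(A)[u]_× holds. -/
open Matrix

noncomputable def skew (u : Fin 3 → ℝ) : Matrix (Fin 3) (Fin 3) ℝ :=
  !![0, -u 2, u 1; u 2, 0, -u 0; -u 1, u 0, 0]

theorem skew_trace_identity (A : Matrix (Fin 3) (Fin 3) ℝ) (u : Fin 3 → ℝ) :
    A * skew u + skew u * Aᵀ + skew (Aᵀ *ᵥ u) = A.trace • skew u := by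
  ext i j
  simp only [skew, trace, diag, Fin.sum_univ_three, mulVec, dotProduct,
    Matrix.add_apply, Matrix.mul_apply, Matrix.smul_apply, transpose_apply, smul_eq_mul]
  fin_cases i <;> fin_cases j <;>
    simp [Fin.sum_univ_three] <;> ring
end

section
/- Let A be a symmetric 3×3 matrix with Ā := (tr(A)I - A)/2 positive definite, and let X in SO(3) have unit quaternion representation (η, ε) (so X = I + 2[ε]_×² + 2η[ε]_× and η² + ‖ε‖² = 1). Then tr(A(I - X)) = 4εᵀĀε. -/
open Matrix

/-- `Ā = (tr(A)·I - A)/2`. -/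
noncomputable def barM (A : Matrix (Fin 3) (Fin 3) ℝ) : Matrix (Fin 3) (Fin 3) ℝ :=
  (1 / 2 : ℝ) • (A.trace • (1 : Matrix (Fin 3) (Fin 3) ℝ) - A)

theorem trace_quaternion (A X : Matrix (Fin 3) (Fin 3) ℝ) (η : ℝ) (ε : Fin 3 → ℝ)
    (hA : Aᵀ = A) (hPD : (barM A).PosDef)
    (hq : η ^ 2 + ε ⬝ᵥ ε = 1)
    (hX : X = 1 + (2 : ℝ) • (skew ε) ^ 2 + (2 * η) • skew ε) :
    (A * (1 - X)).trace = 4 * (ε ⬝ᵥ (barM A *ᵥ ε)) := by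
  subst hX
  have h01 : A 1 0 = A 0 1 := congrFun (congrFun hA 0) 1
  have h02 : A 2 0 = A 0 2 := congrFun (congrFun hA 0) 2
  have h12 : A 2 1 = A 1 2 := congrFun (congrFun hA 1) 2
  simp [trace, Matrix.mul_apply, dotProduct, mulVec, barM, skew, Fin.sum_univ_succ,
    Matrix.one_apply, pow_two, Matrix.sub_apply, Matrix.add_apply, Matrix.smul_apply,
    Matrix.cons_val_zero, Matrix.cons_val_one, Matrix.head_cons, diag]
  ring_nf
  linear_combination (2 * η * ε 2) * h01 - (2 * η * ε 1) * h02 + (2 * η * ε 0) * h12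
end

section
/- Let A be symmetric 3×3 with Ā := (tr(A)I - A)/2 positive definite. For any X in SO(3), 4λ_min(Ā)|X|_I² ≤ tr(A(I - X)) ≤ 4λ_max(Ā)|X|_I², where |X|_I² := tr(I - X)/4. -/
/-!
Put `C_X = (1 - tr X) I + X + Xᵀ`. Since `Ā` is symmetric, `tr(A(I - X)) = tr(Ā C_X)`.
For `X ∈ SO(3)` the adjugate is `Xᵀ`, so Cayley–Hamilton reads `X² = (tr X)(X - I) + Xᵀ`,
whence `C_X² = tr(I - X) C_X`; as `tr(I - X) = ‖X - I‖²_F / 2 ≥ 0`, the symmetric matrix `C_X`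
is positive semidefinite, with trace `tr(I - X) = 4|X|_I²`. In an eigenbasis of `Ā`, `tr(Ā C_X)`
is a combination of the eigenvalues of `Ā` whose weights, the diagonal entries of `C_X` in that
basis, are nonnegative and sum to `tr C_X`; so it lies between `λ_min tr C_X` and `λ_max tr C_X`.
-/

open Matrix

namespace Matrix

/-- Cayley–Hamilton for `3 × 3` matrices, solved for the adjugate. -/
theorem adjugate_fin_three_eq_mul_self_sub {R : Type*} [CommRing R]
    (X : Matrix (Fin 3) (Fin 3) R) :
    X.adjugate = X * X - X.trace • X + X.adjugate.trace • 1 := by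
  ext i j
  fin_cases i <;> fin_cases j <;>
    simp [adjugate_fin_three, mul_apply, Fin.sum_univ_three, trace_fin_three] <;> ring

theorem adjugate_eq_transpose_of_orthogonal {n R : Type*} [Fintype n] [DecidableEq n]
    [CommRing R] {X : Matrix n n R} (hX : Xᵀ * X = 1) (hdet : X.det = 1) :
    X.adjugate = Xᵀ := by
  calc X.adjugate = X.adjugate * X * Xᵀ := by
        rw [Matrix.mul_assoc, mul_eq_one_comm.mp hX, Matrix.mul_one]
    _ = Xᵀ := by rw [adjugate_mul, hdet, one_smul, Matrix.one_mul]

section SpecialOrthogonal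

variable {R : Type*} [CommRing R]

theorem mul_self_eq_of_mem_specialOrthogonal {X : Matrix (Fin 3) (Fin 3) R}
    (hX : Xᵀ * X = 1) (hdet : X.det = 1) :
    X * X = X.trace • X - X.trace • 1 + Xᵀ := by
  have h := adjugate_fin_three_eq_mul_self_sub X
  rw [adjugate_eq_transpose_of_orthogonal hX hdet, trace_transpose] at h
  rw [h]
  abel

/-- For the rotation by `θ` about the unit axis `n` this is `2 (1 - cos θ) n nᵀ`. -/
def axisMatrix (X : Matrix (Fin 3) (Fin 3) R) : Matrix (Fin 3) (Fin 3) R :=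
  (1 - X.trace) • 1 + X + Xᵀ

theorem trace_axisMatrix (X : Matrix (Fin 3) (Fin 3) R) :
    (axisMatrix X).trace = (1 - X).trace := by
  simp only [axisMatrix, trace_add, trace_smul, trace_one, Fintype.card_fin, Nat.cast_ofNat,
    smul_eq_mul, trace_transpose, trace_sub]
  ring

theorem axisMatrix_mul_self {X : Matrix (Fin 3) (Fin 3) R} (hX : Xᵀ * X = 1)
    (hdet : X.det = 1) :
    axisMatrix X * axisMatrix X = (1 - X).trace • axisMatrix X := by
  have hsq := mul_self_eq_of_mem_specialOrthogonal hX hdet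
  have hsq_transpose : Xᵀ * Xᵀ = X.trace • Xᵀ - X.trace • 1 + X := by
    rw [← transpose_mul, hsq]
    simp
  simp only [axisMatrix, add_mul, mul_add, smul_mul, Matrix.mul_smul, Matrix.one_mul,
    Matrix.mul_one, hX, mul_eq_one_comm.mp hX, hsq, hsq_transpose, trace_sub, trace_one,
    Fintype.card_fin, Nat.cast_ofNat]
  module

end SpecialOrthogonal

open scoped ComplexOrder in
theorem IsHermitian.posSemidef_of_mul_self_eq_smul {n 𝕜 : Type*} [Fintype n] [RCLike 𝕜]
    {C : Matrix n n 𝕜} (hC : C.IsHermitian) {τ : ℝ} (hτ : 0 ≤ τ) (h : C * C = τ • C) :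
    C.PosSemidef := by
  rcases hτ.eq_or_lt with rfl | hτ
  · nth_rw 1 [zero_smul, ← hC.eq] at h
    rw [conjTranspose_mul_self_eq_zero] at h
    rw [h]
    exact .zero
  · have hC_eq : C = τ⁻¹ • (Cᴴ * C) := by
      rw [hC.eq, h, smul_smul, inv_mul_cancel₀ hτ.ne', one_smul]
    rw [hC_eq]
    exact (posSemidef_conjTranspose_mul_self C).smul (inv_nonneg.mpr hτ.le)

theorem trace_one_sub_nonneg_of_orthogonal {n : Type*} [Fintype n] [DecidableEq n]
    {X : Matrix n n ℝ} (hX : Xᵀ * X = 1) : 0 ≤ (1 - X).trace := by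
  have h : ((X - 1)ᴴ * (X - 1)).trace = 2 * (1 - X).trace := by
    simp only [conjTranspose_eq_transpose_of_trivial, transpose_sub, transpose_one, sub_mul,
      mul_sub, hX, Matrix.one_mul, Matrix.mul_one, trace_sub, trace_transpose]
    ring
  linarith [(posSemidef_conjTranspose_mul_self (X - 1)).trace_nonneg]

theorem posSemidef_axisMatrix {X : Matrix (Fin 3) (Fin 3) ℝ} (hX : Xᵀ * X = 1)
    (hdet : X.det = 1) : (axisMatrix X).PosSemidef := by
  refine IsHermitian.posSemidef_of_mul_self_eq_smul ?_ (trace_one_sub_nonneg_of_orthogonal hX)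
    (axisMatrix_mul_self hX hdet)
  simp only [IsHermitian, axisMatrix, conjTranspose_eq_transpose_of_trivial, transpose_add,
    transpose_smul, transpose_one, transpose_transpose]
  abel

section EigenvalueBounds

variable {n : Type*} [Fintype n] [DecidableEq n] {B : Matrix n n ℝ} (hB : B.IsHermitian)

theorem IsHermitian.trace_mul_eq_sum_eigenvalues_mul (C : Matrix n n ℝ) :
    (B * C).trace = ∑ i, hB.eigenvalues i *
      (star (hB.eigenvectorUnitary : Matrix n n ℝ) * C * hB.eigenvectorUnitary) i i := by
  conv_lhs => rw [hB.spectral_theorem, Unitary.conjStarAlgAut_apply, Matrix.mul_assoc,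
    Matrix.mul_assoc, trace_mul_comm, Matrix.mul_assoc]
  simp [trace]

theorem IsHermitian.trace_star_eigenvectorUnitary_mul_mul (C : Matrix n n ℝ) :
    (star (hB.eigenvectorUnitary : Matrix n n ℝ) * C * hB.eigenvectorUnitary).trace =
      C.trace := by
  rw [trace_mul_cycle, ← Unitary.coe_star, Unitary.coe_mul_star_self, Matrix.one_mul]

include hB in
theorem IsHermitian.iInf_eigenvalues_mul_trace_le {C : Matrix n n ℝ} (hC : C.PosSemidef) :
    (⨅ i, hB.eigenvalues i) * C.trace ≤ (B * C).trace := by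
  have hD := hC.conjTranspose_mul_mul_same (hB.eigenvectorUnitary : Matrix n n ℝ)
  rw [← star_eq_conjTranspose] at hD
  rw [hB.trace_mul_eq_sum_eigenvalues_mul, ← hB.trace_star_eigenvectorUnitary_mul_mul, trace,
    Finset.mul_sum]
  exact Finset.sum_le_sum fun i _ ↦ mul_le_mul_of_nonneg_right
    (ciInf_le (Finite.bddBelow_range _) i) hD.diag_nonneg

include hB in
theorem IsHermitian.trace_mul_le_iSup_eigenvalues_mul {C : Matrix n n ℝ} (hC : C.PosSemidef) :
    (B * C).trace ≤ (⨆ i, hB.eigenvalues i) * C.trace := by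
  have hD := hC.conjTranspose_mul_mul_same (hB.eigenvectorUnitary : Matrix n n ℝ)
  rw [← star_eq_conjTranspose] at hD
  rw [hB.trace_mul_eq_sum_eigenvalues_mul, ← hB.trace_star_eigenvectorUnitary_mul_mul, trace,
    Finset.mul_sum]
  exact Finset.sum_le_sum fun i _ ↦ mul_le_mul_of_nonneg_right
    (le_ciSup (Finite.bddAbove_range _) i) hD.diag_nonneg

end EigenvalueBounds

end Matrix

theorem trace_mul_one_sub_eq_trace_barM_mul_axisMatrix {A : Matrix (Fin 3) (Fin 3) ℝ}
    (hH : (barM A).IsHermitian) (X : Matrix (Fin 3) (Fin 3) ℝ) :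
    (A * (1 - X)).trace = (barM A * axisMatrix X).trace := by
  have h_transpose : (barM A * Xᵀ).trace = (barM A * X).trace := by
    rw [← trace_transpose, transpose_mul, transpose_transpose,
      ← conjTranspose_eq_transpose_of_trivial, hH.eq, trace_mul_comm]
  rw [axisMatrix, Matrix.mul_add, Matrix.mul_add, trace_add, trace_add, h_transpose]
  simp only [Matrix.mul_sub, Matrix.mul_one, trace_sub, trace_mul_comm A X, barM, one_div,
    Algebra.mul_smul_comm, trace_smul, trace_one, Fintype.card_fin, Nat.cast_ofNat, smul_eq_mul,
    Algebra.smul_mul_assoc, Matrix.sub_mul, Matrix.one_mul]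
  ring

theorem trace_eigen_bounds_general (A X : Matrix (Fin 3) (Fin 3) ℝ)
    (hH : (barM A).IsHermitian)
    (hX : Xᵀ * X = 1) (hdet : X.det = 1) :
    4 * (⨅ i, hH.eigenvalues i) * ((1 - X).trace / 4) ≤ (A * (1 - X)).trace ∧
      (A * (1 - X)).trace ≤ 4 * (⨆ i, hH.eigenvalues i) * ((1 - X).trace / 4) := by
  have hC := posSemidef_axisMatrix hX hdet
  rw [trace_mul_one_sub_eq_trace_barM_mul_axisMatrix hH, ← trace_axisMatrix]
  constructor
  · linarith [hH.iInf_eigenvalues_mul_trace_le hC]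
  · linarith [hH.trace_mul_le_iSup_eigenvalues_mul hC]

theorem trace_eigen_bounds (A X : Matrix (Fin 3) (Fin 3) ℝ)
    (hA : Aᵀ = A) (hH : (barM A).IsHermitian) (hPD : (barM A).PosDef)
    (hX : Xᵀ * X = 1) (hdet : X.det = 1) :
    4 * (⨅ i, hH.eigenvalues i) * ((1 - X).trace / 4) ≤ (A * (1 - X)).trace ∧
      (A * (1 - X)).trace ≤ 4 * (⨆ i, hH.eigenvalues i) * ((1 - X).trace / 4) :=
  trace_eigen_bounds_general A X hH hX hdet
end

section
/- Let A be symmetric 3×3 with Ā := (tr(A)I - A)/2 positive definite. For any X in SO(3) and any v in R^3, vᵀ(λ_min(Ā)I - E(AX))v ≤ (1/2)tr(A(I - X))‖v‖², where E(AX) := (tr(AX)I - XᵀA)/2. -/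
open Matrix

/-- `E(AX) = (tr(AX)I - XᵀA)/2`. -/
noncomputable def Emat (A X : Matrix (Fin 3) (Fin 3) ℝ) : Matrix (Fin 3) (Fin 3) ℝ :=
  (1 / 2 : ℝ) • ((A * X).trace • (1 : Matrix (Fin 3) (Fin 3) ℝ) - Xᵀ * A)


lemma scalar_key (μ c d : Fin 3 → ℝ) (hpos : ∀ i, 0 < μ i)
    (hcd : ∑ i, c i * c i = ∑ i, d i * d i) :
    (⨅ i, μ i) * (∑ i, d i * d i) + ((∑ i, μ i) / 2) * (∑ i, c i * d i)
      - ∑ i, μ i * (c i * d i) ≤ ((∑ i, μ i) / 2) * (∑ i, d i * d i) := by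
  set m := ⨅ i, μ i with hm
  have hmle : ∀ i, m ≤ μ i := fun i => ciInf_le (Finite.bddBelow_range μ) i
  have hm0 : (0:ℝ) ≤ m := le_ciInf fun i => (hpos i).le
  set S := ∑ i, μ i with hS
  have hSsum : S = μ 0 + μ 1 + μ 2 := by simp [hS, Fin.sum_univ_three]
  have hlmax : (0:ℝ) ≤ S - 2 * m := by
    have := hmle 0; have := hmle 1; have := hmle 2; linarith [hSsum ▸ le_refl S]
  -- |S - 2 μ i| ≤ S - 2 m
  have habs : ∀ i, |S - 2 * μ i| ≤ S - 2 * m := by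
    intro i
    rw [abs_le]
    constructor
    · fin_cases i <;>
      · have h0 := hmle 0; have h1 := hmle 1; have h2 := hmle 2
        have := hpos 0; have := hpos 1; have := hpos 2
        rw [hSsum]; push_cast; linarith
    · have := hmle i; linarith
  -- termwise bound
  have hterm : ∀ i, (S - 2 * μ i) * (c i * d i) ≤ (S - 2 * m) * (|c i| * |d i|) := by
    intro i
    calc (S - 2 * μ i) * (c i * d i) ≤ |(S - 2 * μ i) * (c i * d i)| := le_abs_self _
    _ = |S - 2 * μ i| * (|c i| * |d i|) := by rw [abs_mul, abs_mul]
    _ ≤ (S - 2 * m) * (|c i| * |d i|) :=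
        mul_le_mul_of_nonneg_right (habs i) (by positivity)
  -- Cauchy-Schwarz
  have hCS2 : (|c 0| * |d 0| + |c 1| * |d 1| + |c 2| * |d 2|) ^ 2
      ≤ (∑ i, c i * c i) * (∑ i, d i * d i) := by
    simp only [Fin.sum_univ_three]
    nlinarith [sq_nonneg (|c 0| * |d 1| - |c 1| * |d 0|),
      sq_nonneg (|c 0| * |d 2| - |c 2| * |d 0|),
      sq_nonneg (|c 1| * |d 2| - |c 2| * |d 1|),
      sq_abs (c 0), sq_abs (c 1), sq_abs (c 2), sq_abs (d 0), sq_abs (d 1), sq_abs (d 2),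
      abs_nonneg (c 0), abs_nonneg (c 1), abs_nonneg (c 2),
      abs_nonneg (d 0), abs_nonneg (d 1), abs_nonneg (d 2)]
  have hd0 : (0:ℝ) ≤ ∑ i, d i * d i := by
    apply Finset.sum_nonneg; intro i _; exact mul_self_nonneg _
  have habsnn : (0:ℝ) ≤ |c 0| * |d 0| + |c 1| * |d 1| + |c 2| * |d 2| := by positivity
  have hCS : |c 0| * |d 0| + |c 1| * |d 1| + |c 2| * |d 2| ≤ ∑ i, d i * d i := by
    have h2 : (|c 0| * |d 0| + |c 1| * |d 1| + |c 2| * |d 2|) ^ 2 ≤ (∑ i, d i * d i) ^ 2 := by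
      rw [hcd, ← sq] at hCS2; exact hCS2
    exact (pow_le_pow_iff_left₀ habsnn hd0 two_ne_zero).mp h2
  have hmain : ∑ i, (S - 2 * μ i) * (c i * d i) ≤ (S - 2 * m) * (∑ i, d i * d i) := by
    calc ∑ i, (S - 2 * μ i) * (c i * d i)
        ≤ ∑ i, (S - 2 * m) * (|c i| * |d i|) := Finset.sum_le_sum fun i _ => hterm i
    _ = (S - 2 * m) * (|c 0| * |d 0| + |c 1| * |d 1| + |c 2| * |d 2|) := by
        simp [Fin.sum_univ_three]; ring
    _ ≤ (S - 2 * m) * (∑ i, d i * d i) := mul_le_mul_of_nonneg_left hCS hlmax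
  have hexp : ∑ i, (S - 2 * μ i) * (c i * d i)
      = S * (∑ i, c i * d i) - 2 * ∑ i, μ i * (c i * d i) := by
    simp only [Fin.sum_univ_three]; ring
  rw [hexp] at hmain
  linarith

lemma dot_aux (M : Matrix (Fin 3) (Fin 3) ℝ) (x y : Fin 3 → ℝ) :
    x ⬝ᵥ (M *ᵥ y) = (Mᵀ *ᵥ x) ⬝ᵥ y := by
  rw [Matrix.dotProduct_mulVec, Matrix.mulVec_transpose]

theorem Emat_lower_bound (A X : Matrix (Fin 3) (Fin 3) ℝ) (v : Fin 3 → ℝ)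
    (hA : Aᵀ = A) (hH : (barM A).IsHermitian) (hPD : (barM A).PosDef)
    (hX : Xᵀ * X = 1) (hdet : X.det = 1) :
    v ⬝ᵥ (((⨅ i, hH.eigenvalues i) • (1 : Matrix (Fin 3) (Fin 3) ℝ) - Emat A X) *ᵥ v)
      ≤ (1 / 2) * (A * (1 - X)).trace * (v ⬝ᵥ v) := by
  set μ : Fin 3 → ℝ := hH.eigenvalues with hμ
  set U : Matrix (Fin 3) (Fin 3) ℝ := (hH.eigenvectorUnitary : Matrix (Fin 3) (Fin 3) ℝ) with hUdef
  have hsU : star U = Uᵀ := by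
    ext i j; simp [Matrix.star_apply]
  have hU1 : Uᵀ * U = 1 := by
    rw [← hsU]; exact Matrix.UnitaryGroup.star_mul_self hH.eigenvectorUnitary
  have hU2 : U * Uᵀ = 1 := by
    rw [← hsU]; exact Matrix.mem_unitaryGroup_iff.mp hH.eigenvectorUnitary.2
  have hspec : barM A = U * diagonal μ * Uᵀ := by
    rw [← hsU]
    have := hH.spectral_theorem
    simpa using this
  set u : Fin 3 → ℝ := X *ᵥ v with hu
  set c : Fin 3 → ℝ := Uᵀ *ᵥ u with hc
  set d : Fin 3 → ℝ := Uᵀ *ᵥ v with hd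
  -- norms
  have huu : u ⬝ᵥ u = v ⬝ᵥ v := by
    rw [hu, dot_aux X, Matrix.mulVec_mulVec, hX, Matrix.one_mulVec]
  have hcc : c ⬝ᵥ c = v ⬝ᵥ v := by
    rw [hc, dot_aux Uᵀ, Matrix.transpose_transpose, Matrix.mulVec_mulVec, hU2,
      Matrix.one_mulVec, huu]
  have hdd : d ⬝ᵥ d = v ⬝ᵥ v := by
    rw [hd, dot_aux Uᵀ, Matrix.transpose_transpose, Matrix.mulVec_mulVec, hU2,
      Matrix.one_mulVec]
  have hcd : u ⬝ᵥ v = c ⬝ᵥ d := by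
    rw [hc, hd, dot_aux Uᵀ, Matrix.transpose_transpose, Matrix.mulVec_mulVec, hU2,
      Matrix.one_mulVec]
  -- quadratic form of barM
  have hB : u ⬝ᵥ (barM A *ᵥ v) = ∑ i, μ i * (c i * d i) := by
    rw [hspec, ← Matrix.mulVec_mulVec, ← Matrix.mulVec_mulVec, dot_aux U, ← hc, ← hd]
    simp only [dotProduct, Matrix.mulVec_diagonal]
    exact Finset.sum_congr rfl fun i _ => by ring
  -- trace identities
  have htrB : (barM A).trace = A.trace := by
    simp [barM, Matrix.trace_smul, Matrix.trace_sub, Matrix.trace_one, Matrix.trace_smul]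
    ring
  have htrS : A.trace = ∑ i, μ i := by
    rw [← htrB, hspec, Matrix.trace_mul_cycle, hU1, Matrix.one_mul, Matrix.trace_diagonal]
  -- A in terms of barM
  have hAdec : A = A.trace • (1 : Matrix (Fin 3) (Fin 3) ℝ) - (2:ℝ) • barM A := by
    rw [barM]; module
  have hAv : u ⬝ᵥ (A *ᵥ v) = A.trace * (u ⬝ᵥ v) - 2 * (u ⬝ᵥ (barM A *ᵥ v)) := by
    conv_lhs => rw [hAdec]
    rw [Matrix.sub_mulVec, Matrix.smul_mulVec, Matrix.smul_mulVec,
      Matrix.one_mulVec, dotProduct_sub, dotProduct_smul, dotProduct_smul]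
    simp [smul_eq_mul]
  -- expand LHS
  have hL : v ⬝ᵥ (((⨅ i, μ i) • (1 : Matrix (Fin 3) (Fin 3) ℝ) - Emat A X) *ᵥ v)
      = (⨅ i, μ i) * (v ⬝ᵥ v)
        - (1/2) * ((A * X).trace * (v ⬝ᵥ v) - u ⬝ᵥ (A *ᵥ v)) := by
    rw [Matrix.sub_mulVec, dotProduct_sub, Matrix.smul_mulVec,
      Matrix.one_mulVec, dotProduct_smul]
    have h1 : v ⬝ᵥ (Emat A X *ᵥ v)
        = (1/2) * ((A * X).trace * (v ⬝ᵥ v) - u ⬝ᵥ (A *ᵥ v)) := by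
      rw [Emat, Matrix.smul_mulVec, dotProduct_smul, Matrix.sub_mulVec,
        Matrix.smul_mulVec, Matrix.one_mulVec, dotProduct_sub,
        dotProduct_smul, ← Matrix.mulVec_mulVec, dot_aux Xᵀ,
        Matrix.transpose_transpose, ← hu]
      simp [smul_eq_mul]
    rw [h1]
    simp [smul_eq_mul]
  -- expand RHS
  have hR : (A * (1 - X)).trace = A.trace - (A * X).trace := by
    rw [Matrix.mul_sub, Matrix.mul_one, Matrix.trace_sub]
  have hdd' : v ⬝ᵥ v = ∑ i, d i * d i := by rw [← hdd]; rfl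
  have hcc' : ∑ i, c i * c i = ∑ i, d i * d i := by
    have h : c ⬝ᵥ c = ∑ i, c i * c i := rfl
    rw [← h, hcc, hdd']
  have hcdsum : c ⬝ᵥ d = ∑ i, c i * d i := rfl
  rw [hL, hR, hAv, htrS, hcd, hB, hdd', hcdsum]
  have hkey := scalar_key μ c d (fun i => hPD.eigenvalues_pos i) hcc'
  nlinarith [hkey]
end

section
/- For any unit vector ε direction and orthonormal basis {ν(1), ν(2), ν(3)} of R^3, letting cos(ϑ(p)) := ν(p)ᵀε/‖ε‖ for nonzero ε, and setting ϑ(p+3) corresponding to ν(p+3) = -ν(p): for any q in {1,...,6}, max over p in {1,...,6} of |cos(ϑ(q)) - cos(ϑ(p))| ≥ 1/√3. -/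
open Matrix

theorem cos_gap (ε : Fin 3 → ℝ) (hε : ε ≠ 0)
    (ν : Fin 3 → Fin 3 → ℝ)
    (hortho : ∀ i j, ν i ⬝ᵥ ν j = if i = j then 1 else 0)
    (q : Fin 3) (s : ℝ) (hs : s = 1 ∨ s = -1) :
    ∃ (p : Fin 3) (t : ℝ), (t = 1 ∨ t = -1) ∧
      |s * (ν q ⬝ᵥ ε / Real.sqrt (ε ⬝ᵥ ε)) - t * (ν p ⬝ᵥ ε / Real.sqrt (ε ⬝ᵥ ε))|
        ≥ 1 / Real.sqrt 3 := by
  set M : Matrix (Fin 3) (Fin 3) ℝ := Matrix.of ν with hMdef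
  have hM : M * Mᵀ = 1 := by
    ext i j
    simpa [Matrix.mul_apply, Matrix.one_apply, dotProduct, M] using hortho i j
  have hM' : Mᵀ * M = 1 := mul_eq_one_comm.mp hM
  have hsum : ∑ p : Fin 3, (ν p ⬝ᵥ ε)^2 = ε ⬝ᵥ ε := by
    have h1 : (M.mulVec ε) ⬝ᵥ (M.mulVec ε) = ε ⬝ᵥ ε := by
      rw [Matrix.dotProduct_mulVec, ← Matrix.mulVec_transpose,
        Matrix.mulVec_mulVec, hM', Matrix.one_mulVec]
    calc ∑ p : Fin 3, (ν p ⬝ᵥ ε)^2 = (M.mulVec ε) ⬝ᵥ (M.mulVec ε) := by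
            simp [dotProduct, Matrix.mulVec, sq, M]
      _ = ε ⬝ᵥ ε := h1
  -- positivity of ε ⬝ᵥ ε
  have hpos : 0 < ε ⬝ᵥ ε := by
    rcases (Function.ne_iff).mp hε with ⟨i, hi⟩
    have : 0 < ∑ j : Fin 3, ε j * ε j := by
      apply Finset.sum_pos' (fun j _ => mul_self_nonneg _)
      exact ⟨i, Finset.mem_univ i, mul_self_pos.mpr hi⟩
    simpa [dotProduct] using this
  set N := Real.sqrt (ε ⬝ᵥ ε) with hNdef
  have hN : 0 < N := Real.sqrt_pos.mpr hpos
  have hN2 : N ^ 2 = ε ⬝ᵥ ε := Real.sq_sqrt hpos.le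
  set c : Fin 3 → ℝ := fun p => ν p ⬝ᵥ ε / N with hcdef
  have hcsum : ∑ p : Fin 3, (c p)^2 = 1 := by
    have : ∑ p : Fin 3, (c p)^2 = (∑ p : Fin 3, (ν p ⬝ᵥ ε)^2) / N^2 := by
      simp [c, div_pow, Finset.sum_div]
    rw [this, hsum, hN2, div_self hpos.ne']
  have hbig : ∃ p : Fin 3, 1/3 ≤ (c p)^2 := by
    by_contra h
    push_neg at h
    have h0 := h 0; have h1 := h 1; have h2 := h 2
    rw [Fin.sum_univ_three] at hcsum
    linarith
  obtain ⟨p, hp⟩ := hbig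
  have hs3 : (0:ℝ) < Real.sqrt 3 := by positivity
  have habs : 1 / Real.sqrt 3 ≤ |c p| := by
    have : Real.sqrt (1/3) ≤ Real.sqrt ((c p)^2) := Real.sqrt_le_sqrt hp
    rwa [Real.sqrt_sq_eq_abs, show (1:ℝ)/3 = 1/(Real.sqrt 3)^2 by
      rw [Real.sq_sqrt (by norm_num : (3:ℝ) ≥ 0)],
      show (1:ℝ)/(Real.sqrt 3)^2 = (1/Real.sqrt 3)^2 by ring,
      Real.sqrt_sq (by positivity)] at this
  set x := s * c q with hx
  set y := c p with hy
  rcases le_or_gt (1 / Real.sqrt 3) |x - y| with h | h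
  · refine ⟨p, 1, Or.inl rfl, ?_⟩
    show |x - 1 * y| ≥ 1 / Real.sqrt 3
    rw [one_mul]; exact h
  · refine ⟨p, -1, Or.inr rfl, ?_⟩
    have key : |2 * y| ≤ |x + y| + |x - y| := by
      have := abs_add_le (x + y) (y - x)
      rw [show x + y + (y - x) = 2 * y by ring] at this
      simpa [abs_sub_comm x y] using this
    have h2y : |2 * y| = 2 * |y| := by rw [abs_mul]; norm_num
    show |x - (-1) * y| ≥ 1 / Real.sqrt 3
    rw [show x - (-1) * y = x + y by ring]
    rw [h2y] at key
    linarith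
end

section
/- Let A be symmetric with Ā := (tr(A)I - A)/2 positive definite and set U_A(X) := tr(A(I-X))/(4λ_max(Ā)) and V_A(X) := 2(1 - √(1 - U_A(X))). Then for all X in SO(3) with U_A(X) < 1: ξ|X|_I² ≤ U_A(X) ≤ V_A(X) ≤ 2U_A(X) ≤ 2|X|_I², where ξ = λ_min(Ā)/λ_max(Ā) and |X|_I² = tr(I-X)/4. -/
/-!
Write `P := (1 - tr X) I + X + Xᵀ`; for a rotation by `θ` about the unit axis `n` this is
`2(1 - cos θ) n nᵀ`, and `tr(Ā P) = tr(A(I - X))`, `tr P = tr(I - X)`. Positive semidefiniteness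
of `P` comes from composing `X` with the reflection in `y⊥`: the result is an improper orthogonal
map, so its trace `tr X - 2 yᵀXy / |y|²` is at most `1`. Bounding `tr(Ā P)` between
`λ_min(Ā) tr P` and `λ_max(Ā) tr P` gives the outer inequalities; the inner ones are
`u ≤ 2(1 - √(1 - u)) ≤ 2u` on `[0, 1]`.
-/

open Matrix

lemma le_two_mul_one_sub_sqrt_one_sub {u : ℝ} (hu : u ≤ 1) : u ≤ 2 * (1 - √(1 - u)) := by
  have hsq := Real.sq_sqrt (sub_nonneg.mpr hu)
  nlinarith [sq_nonneg (√(1 - u) - 1)]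

lemma two_mul_one_sub_sqrt_one_sub_le {u : ℝ} (hu : 0 ≤ u) : 2 * (1 - √(1 - u)) ≤ 2 * u := by
  have hle : 1 - u ≤ √(1 - u) := by
    rcases le_total (1 - u) 0 with h | h
    · exact h.trans (Real.sqrt_nonneg _)
    · exact Real.le_sqrt_of_sq_le (by nlinarith)
  linarith

namespace Matrix.IsHermitian

variable {n : Type*} [Fintype n] [DecidableEq n] {B : Matrix n n ℝ} (hB : B.IsHermitian)
include hB

lemma trace_mul_eq_sum_eigenvalues_mul_s18 (P : Matrix n n ℝ) :
    (B * P).trace = ∑ i, hB.eigenvalues i *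
      ((hB.eigenvectorUnitary : Matrix n n ℝ)ᴴ * P * hB.eigenvectorUnitary) i i := by
  conv_lhs => rw [hB.spectral_theorem, Unitary.conjStarAlgAut_apply]
  rw [mul_assoc, trace_mul_cycle, trace_mul_comm]
  simp [Matrix.trace, diagonal_mul, star_eq_conjTranspose]

lemma trace_conj_eigenvectorUnitary (P : Matrix n n ℝ) :
    ((hB.eigenvectorUnitary : Matrix n n ℝ)ᴴ * P * hB.eigenvectorUnitary).trace = P.trace := by
  rw [trace_mul_cycle, ← star_eq_conjTranspose,
    Unitary.mul_star_self_of_mem hB.eigenvectorUnitary.2, one_mul]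

variable {P : Matrix n n ℝ}

lemma iInf_eigenvalues_mul_trace_le_trace_mul (hP : P.PosSemidef) :
    (⨅ i, hB.eigenvalues i) * P.trace ≤ (B * P).trace := by
  rw [hB.trace_mul_eq_sum_eigenvalues_mul_s18, ← hB.trace_conj_eigenvectorUnitary P, trace,
    Finset.mul_sum]
  exact Finset.sum_le_sum fun i _ ↦ mul_le_mul_of_nonneg_right
    (ciInf_le (Finite.bddBelow_range _) i) (hP.conjTranspose_mul_mul_same _).diag_nonneg

lemma trace_mul_le_iSup_eigenvalues_mul_trace (hP : P.PosSemidef) :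
    (B * P).trace ≤ (⨆ i, hB.eigenvalues i) * P.trace := by
  rw [hB.trace_mul_eq_sum_eigenvalues_mul_s18, ← hB.trace_conj_eigenvectorUnitary P, trace,
    Finset.mul_sum]
  exact Finset.sum_le_sum fun i _ ↦ mul_le_mul_of_nonneg_right
    (le_ciSup (Finite.bddAbove_range _) i) (hP.conjTranspose_mul_mul_same _).diag_nonneg

end Matrix.IsHermitian

lemma neg_one_le_trace_of_det_eq_one {R : Matrix (Fin 3) (Fin 3) ℝ} (hR : Rᵀ * R = 1)
    (hdet : R.det = 1) : -1 ≤ R.trace := by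
  have hadj : adjugate R = Rᵀ := by
    simpa [← mul_assoc, hR, hdet] using congrArg (Rᵀ * ·) (mul_adjugate R)
  -- `tr R` is the sum of the principal 2×2 minors and `∑ Rᵢⱼ² = 3`, whence `(tr R)² - 2 tr R ≤ 3`.
  have hminors := congrArg trace hadj
  have hnorm := congrArg trace hR
  rw [adjugate_fin_three, trace_transpose] at hminors
  simp only [Fin.isValue, trace_fin_three, of_apply, cons_val', cons_val_zero, cons_val_fin_one,
    cons_val_one, cons_val, mul_apply, transpose_apply, Fin.sum_univ_three, trace_one,
    Fintype.card_fin, Nat.cast_ofNat, ge_iff_le] at hminors hnorm ⊢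
  nlinarith [sq_nonneg (R 0 1 - R 1 0), sq_nonneg (R 0 2 - R 2 0), sq_nonneg (R 1 2 - R 2 1)]

lemma trace_le_one_of_det_eq_neg_one {W : Matrix (Fin 3) (Fin 3) ℝ} (hW : Wᵀ * W = 1)
    (hdet : W.det = -1) : W.trace ≤ 1 := by
  have hneg := neg_one_le_trace_of_det_eq_one (R := -W) (by simpa using hW)
    (by rw [det_neg, hdet]; norm_num)
  simpa using hneg

section Householder

variable {n : Type*} [Fintype n] [DecidableEq n] {y : n → ℝ}

noncomputable def householder (y : n → ℝ) : Matrix n n ℝ :=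
  1 - (2 / (y ⬝ᵥ y)) • vecMulVec y y

lemma householder_transpose (y : n → ℝ) : (householder y)ᵀ = householder y := by
  simp [householder, transpose_vecMulVec]

lemma householder_mul_self (hy : y ≠ 0) : householder y * householder y = 1 := by
  have hc : y ⬝ᵥ y ≠ 0 := dotProduct_self_eq_zero.not.mpr hy
  simp only [householder, sub_mul, mul_sub, one_mul, mul_one, smul_mul_smul_comm,
    vecMulVec_mul_vecMulVec, vecMulVec_smul, smul_smul]
  rw [show 2 / (y ⬝ᵥ y) * (2 / (y ⬝ᵥ y)) * (y ⬝ᵥ y) = 2 / (y ⬝ᵥ y) + 2 / (y ⬝ᵥ y) by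
    field_simp; ring, add_smul]
  abel

lemma det_householder (hy : y ≠ 0) : (householder y).det = -1 := by
  have hc : y ⬝ᵥ y ≠ 0 := dotProduct_self_eq_zero.not.mpr hy
  rw [householder, sub_eq_add_neg, ← neg_smul, ← smul_vecMulVec, vecMulVec_eq Unit,
    det_one_add_replicateCol_mul_replicateRow, dotProduct_smul, smul_eq_mul]
  field_simp
  ring

lemma trace_mul_householder (X : Matrix n n ℝ) (y : n → ℝ) :
    (X * householder y).trace = X.trace - 2 / (y ⬝ᵥ y) * (y ⬝ᵥ X *ᵥ y) := by
  rw [householder, mul_sub, mul_one, trace_sub, mul_smul_comm, trace_smul, smul_eq_mul,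
    trace_mul_comm, vecMulVec_mul, trace_vecMulVec, dotProduct_mulVec, dotProduct_comm (y ᵥ* X)]

end Householder

def rotationAxisMatrix (X : Matrix (Fin 3) (Fin 3) ℝ) : Matrix (Fin 3) (Fin 3) ℝ :=
  (1 - X.trace) • 1 + X + Xᵀ

lemma trace_rotationAxisMatrix (X : Matrix (Fin 3) (Fin 3) ℝ) :
    (rotationAxisMatrix X).trace = (1 - X).trace := by
  simp only [rotationAxisMatrix, trace_add, trace_smul, trace_sub, trace_transpose, trace_one,
    Fintype.card_fin, smul_eq_mul]
  ring

lemma trace_barM_mul_rotationAxisMatrix {A : Matrix (Fin 3) (Fin 3) ℝ} (hA : Aᵀ = A)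
    (X : Matrix (Fin 3) (Fin 3) ℝ) :
    (barM A * rotationAxisMatrix X).trace = (A * (1 - X)).trace := by
  have hAX : (A * Xᵀ).trace = (A * X).trace := by
    rw [← trace_transpose, transpose_mul, transpose_transpose, hA, trace_mul_comm]
  simp only [barM, rotationAxisMatrix, smul_mul_assoc, sub_mul, one_mul, mul_add, mul_sub,
    mul_smul_comm, mul_one, trace_add, trace_sub, trace_smul, trace_transpose, trace_one,
    Fintype.card_fin, smul_eq_mul, hAX]
  ring

lemma posSemidef_rotationAxisMatrix {X : Matrix (Fin 3) (Fin 3) ℝ} (hX : Xᵀ * X = 1)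
    (hdet : X.det = 1) : (rotationAxisMatrix X).PosSemidef := by
  refine .of_dotProduct_mulVec_nonneg ?_ fun y ↦ ?_
  · rw [IsHermitian, conjTranspose_eq_transpose_of_trivial, rotationAxisMatrix, transpose_add,
      transpose_add, transpose_smul, transpose_one, transpose_transpose]
    abel
  rcases eq_or_ne y 0 with rfl | hy
  · simp
  have hc : 0 < y ⬝ᵥ y := by
    simpa using dotProduct_self_star_pos_iff.mpr hy
  have hreflect := trace_le_one_of_det_eq_neg_one (W := X * householder y)
    (by rw [transpose_mul, householder_transpose, mul_assoc, ← mul_assoc Xᵀ, hX, one_mul,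
      householder_mul_self hy])
    (by rw [det_mul, hdet, det_householder hy, one_mul])
  rw [trace_mul_householder] at hreflect
  have hquad :
      y ⬝ᵥ rotationAxisMatrix X *ᵥ y = (1 - X.trace) * (y ⬝ᵥ y) + 2 * (y ⬝ᵥ X *ᵥ y) := by
    rw [rotationAxisMatrix, add_mulVec, add_mulVec, smul_mulVec, one_mulVec, dotProduct_add,
      dotProduct_add, dotProduct_smul, smul_eq_mul, mulVec_transpose, dotProduct_comm y (y ᵥ* X),
      ← dotProduct_mulVec]
    ring
  rw [star_trivial, hquad]
  have hcleared := mul_le_mul_of_nonneg_right hreflect hc.le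
  have hcancel : 2 / (y ⬝ᵥ y) * (y ⬝ᵥ X *ᵥ y) * (y ⬝ᵥ y) = 2 * (y ⬝ᵥ X *ᵥ y) := by
    field_simp
  rw [sub_mul, hcancel] at hcleared
  linarith

theorem UA_VA_chain (A X : Matrix (Fin 3) (Fin 3) ℝ)
    (hA : Aᵀ = A) (hH : (barM A).IsHermitian) (hPD : (barM A).PosDef)
    (hX : Xᵀ * X = 1) (hdet : X.det = 1)
    (hU : (A * (1 - X)).trace / (4 * ⨆ i, hH.eigenvalues i) < 1) :
    ((⨅ i, hH.eigenvalues i) / (⨆ i, hH.eigenvalues i)) * ((1 - X).trace / 4)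
        ≤ (A * (1 - X)).trace / (4 * ⨆ i, hH.eigenvalues i)
    ∧ (A * (1 - X)).trace / (4 * ⨆ i, hH.eigenvalues i)
        ≤ 2 * (1 - Real.sqrt (1 - (A * (1 - X)).trace / (4 * ⨆ i, hH.eigenvalues i)))
    ∧ 2 * (1 - Real.sqrt (1 - (A * (1 - X)).trace / (4 * ⨆ i, hH.eigenvalues i)))
        ≤ 2 * ((A * (1 - X)).trace / (4 * ⨆ i, hH.eigenvalues i))
    ∧ 2 * ((A * (1 - X)).trace / (4 * ⨆ i, hH.eigenvalues i))
        ≤ 2 * ((1 - X).trace / 4) := by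
  have hP := posSemidef_rotationAxisMatrix hX hdet
  have hlow := hH.iInf_eigenvalues_mul_trace_le_trace_mul hP
  have hhigh := hH.trace_mul_le_iSup_eigenvalues_mul_trace hP
  rw [trace_barM_mul_rotationAxisMatrix hA, trace_rotationAxisMatrix] at hlow hhigh
  have htrace : 0 ≤ (1 - X).trace := trace_rotationAxisMatrix X ▸ hP.trace_nonneg
  have hmin : 0 < ⨅ i, hH.eigenvalues i := by
    obtain ⟨i, hi⟩ := exists_eq_ciInf_of_finite (f := hH.eigenvalues)
    exact hi ▸ hPD.eigenvalues_pos i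
  have hmax : 0 < 4 * ⨆ i, hH.eigenvalues i :=
    mul_pos four_pos ((hPD.eigenvalues_pos 0).trans_le (le_ciSup (Finite.bddAbove_range _) 0))
  refine ⟨?_, le_two_mul_one_sub_sqrt_one_sub hU.le,
    two_mul_one_sub_sqrt_one_sub_le (div_nonneg ?_ hmax.le), ?_⟩
  · rw [div_mul_div_comm, mul_comm _ (4 : ℝ)]
    exact div_le_div_of_nonneg_right hlow hmax.le
  · exact (mul_nonneg hmin.le htrace).trans hlow
  · rw [mul_le_mul_iff_right₀ two_pos, div_le_iff₀ hmax]
    linarith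
end
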